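/- Let Y₀, Y₁, …, Y_r and Z be Banach spaces with continuous linear embeddings ι_{i,j}: Y_i → Y_j for i < j, let U ⊂ Y_r be open, and let F ∈ C^{r+1}(U, Z). Define F_r(y₀,…,y_r) = (d^r/dt^r)|_{t=0} F(∑_{j=0}^r t^j ι_{j,r}(y_j)). Then F_r is well defined and C¹ on ι_{0,r}^{-1}(U) × Y₁ × ⋯ × Y_r with values in Z. -/

import Mathlib

/-!
Put `G (t, y) = F (∑ j, t ^ j • ι j (y j))`, a `C^{r+1}` map on the open set of
`ℝ × ∏ j, Y j` where the sum lies in `U`. Then `F_r y` is the `r`-th derivative of `G` at `(0, y)`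
in the direction `(1, 0)`, i.e. `D^r G (0, y)` applied to `(1, 0), …, (1, 0)`, and `D^r G` is `C¹`
because `G` is `C^{r+1}`.
-/

section DirectionalDerivative

variable {𝕜 E F : Type*} [NontriviallyNormedField 𝕜] [NormedAddCommGroup E] [NormedSpace 𝕜 E]
  [NormedAddCommGroup F] [NormedSpace 𝕜 F] {f : E → F} {s : Set E} {n : WithTop ℕ∞}

theorem ContDiffOn.iteratedDeriv_comp_add_smul (hf : ContDiffOn 𝕜 n f s) (hs : IsOpen s)
    {x : E} (hx : x ∈ s) (v : E) {r : ℕ} (hr : r ≤ n) :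
    iteratedDeriv r (fun t : 𝕜 => f (x + t • v)) 0 = iteratedFDeriv 𝕜 r f x fun _ => v := by
  set L : 𝕜 →L[𝕜] E := ContinuousLinearMap.toSpanSingleton 𝕜 v
  set s' : Set E := (x + ·) ⁻¹' s
  have hs' : IsOpen s' := hs.preimage (continuous_const_add x)
  have hLs' : IsOpen (L ⁻¹' s') := hs'.preimage L.continuous
  have h0 : (0 : E) ∈ s' := by simpa [s'] using hx
  have hL0 : (0 : 𝕜) ∈ L ⁻¹' s' := by simpa using h0
  have hshift : ContDiffOn 𝕜 n (fun z => f (x + z)) s' :=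
    hf.comp (contDiff_const.add contDiff_id).contDiffOn fun _ hz => hz
  have hline : (fun t : 𝕜 => f (x + t • v)) = (fun z => f (x + z)) ∘ L := by
    funext t; simp [L]
  rw [iteratedDeriv_eq_iteratedFDeriv, hline, ← iteratedFDerivWithin_of_isOpen r hLs' hL0,
    L.iteratedFDerivWithin_comp_right hshift hs'.uniqueDiffOn hLs'.uniqueDiffOn
      (by simpa using h0) hr]
  simp [iteratedFDerivWithin_of_isOpen r hs' h0, iteratedFDeriv_comp_add_left, L]

theorem ContDiffOn.contDiffOn_iteratedDeriv_comp_add_smul {m : WithTop ℕ∞} {r : ℕ}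
    (hf : ContDiffOn 𝕜 (m + r) f s) (hs : IsOpen s) (v : E) :
    ContDiffOn 𝕜 m (fun x => iteratedDeriv r (fun t : 𝕜 => f (x + t • v)) 0) s := by
  have hD : ContDiffOn 𝕜 m (fun x => iteratedFDeriv 𝕜 r f x fun _ => v) s := fun x hx =>
    (ContinuousMultilinearMap.apply 𝕜 (fun _ : Fin r => E) F fun _ => v).contDiff
      |>.comp_contDiffWithinAt
        ((hf.contDiffAt (hs.mem_nhds hx)).iteratedFDeriv_right le_rfl).contDiffWithinAt
  exact hD.congr fun x hx => hf.iteratedDeriv_comp_add_smul hs hx v le_add_self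

end DirectionalDerivative

theorem stmt8_general (r : ℕ)
    (Y : Fin (r + 1) → Type*) [∀ j, NormedAddCommGroup (Y j)]
    [∀ j, NormedSpace ℝ (Y j)]
    (Yr Z : Type*) [NormedAddCommGroup Yr] [NormedSpace ℝ Yr]
    [NormedAddCommGroup Z] [NormedSpace ℝ Z]
    (ι : ∀ j, Y j →L[ℝ] Yr)
    (U : Set Yr) (hU : IsOpen U) (F : Yr → Z) (hF : ContDiffOn ℝ (r + 1) F U) :
    ContDiffOn ℝ 1
      (fun y : ∀ j, Y j =>
        iteratedDeriv r (fun t : ℝ => F (∑ j : Fin (r + 1), t ^ (j : ℕ) • ι j (y j))) 0)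
      {y : ∀ j, Y j | ι 0 (y 0) ∈ U} := by
  let S : ℝ × (∀ j, Y j) → Yr := fun p => ∑ j : Fin (r + 1), p.1 ^ (j : ℕ) • ι j (p.2 j)
  have hS : ContDiff ℝ (1 + r) S := ContDiff.sum fun j _ =>
    (contDiff_fst.pow _).smul ((ι j).contDiff.comp (contDiff_pi.mp contDiff_snd j))
  have hFS : ContDiffOn ℝ (1 + r) (F ∘ S) (S ⁻¹' U) :=
    (add_comm (r : WithTop ℕ∞) 1 ▸ hF).comp hS.contDiffOn fun _ hp => hp
  have hS₀ : ∀ y, S (0, y) = ι 0 (y 0) := fun y => by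
    simp [S, Fin.sum_univ_succ]
  have hslice := (hFS.contDiffOn_iteratedDeriv_comp_add_smul (hU.preimage hS.continuous)
    ((1 : ℝ), (0 : ∀ j, Y j))).comp (contDiff_const.prodMk contDiff_id).contDiffOn
      (s := {y : ∀ j, Y j | ι 0 (y 0) ∈ U}) fun y hy => show S (0, y) ∈ U by rwa [hS₀]
  refine hslice.congr fun y _ => ?_
  simp [S]

/-- **Differentiated composition maps are `C¹`.** Given Banach spaces `Y₀,…,Y_r`, `Y_r'`
(`Yr`), `Z`, continuous linear embeddings `ι j : Y j → Yr`, an open `U ⊆ Yr` and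
`F ∈ C^{r+1}(U, Z)`, the map
`F_r(y₀,…,y_r) = (d^r/dt^r)|_{t=0} F(∑ t^j ι j (y j))`
is well defined and `C¹` on `{y | ι 0 (y 0) ∈ U} = ι₀⁻¹(U) × Y₁ × ⋯ × Y_r`. -/
theorem stmt8 (r : ℕ)
    (Y : Fin (r + 1) → Type*) [∀ j, NormedAddCommGroup (Y j)]
    [∀ j, NormedSpace ℝ (Y j)] [∀ j, CompleteSpace (Y j)]
    (Yr Z : Type*) [NormedAddCommGroup Yr] [NormedSpace ℝ Yr] [CompleteSpace Yr]
    [NormedAddCommGroup Z] [NormedSpace ℝ Z] [CompleteSpace Z]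
    (ι : ∀ j, Y j →L[ℝ] Yr) (hι : ∀ j, Function.Injective (ι j))
    (U : Set Yr) (hU : IsOpen U) (F : Yr → Z) (hF : ContDiffOn ℝ (r + 1) F U) :
    ContDiffOn ℝ 1
      (fun y : ∀ j, Y j =>
        iteratedDeriv r (fun t : ℝ => F (∑ j : Fin (r + 1), t ^ (j : ℕ) • ι j (y j))) 0)
      {y : ∀ j, Y j | ι 0 (y 0) ∈ U} :=
  stmt8_general r Y Yr Z ι U hU F hF
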